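/- For a positive integer m, a complex number b such that m - b is not a positive integer, and complex z with 0 < |z| < 1, one has F(1,b;m;z) = (m-1)! · (-z)^{1-m} / (1-b)_{m-1} · [ (1-z)^{m-b-1} - ∑_{k=0}^{m-2} (b-m+1)_k / k! · z^k ]. -/

import Mathlib

/-- Pochhammer symbol `(x)_k = x(x+1)⋯(x+k-1)` for a complex number. -/
noncomputable def pochC (x : ℂ) (k : ℕ) : ℂ := ∏ i ∈ Finset.range k, (x + i)

/-- Gauss hypergeometric series `₂F₁(a,b;c;z)`. -/
noncomputable def hypF (a b c z : ℂ) : ℂ :=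
  ∑' k : ℕ, pochC a k * pochC b k / (pochC c k * (k.factorial : ℂ)) * z ^ k

/-! Since `(1)_n = n!`, `F(1,b;m;z) = ∑ (b)_n / (m)_n zⁿ`. With `a = b - m + 1` this is, up to the
factor `(m-1)! / ((a)_{m-1} z^{m-1})`, the tail from index `m - 1` of the binomial series
`(1 - z)^{-a} = ∑ (a)_k / k! zᵏ`, because `(a)_{n+m-1} = (a)_{m-1} (b)_n` and
`(n+m-1)! = (m-1)! (m)_n`. The reflection `(b-m+1)_{m-1} = (-1)^{m-1} (1-b)_{m-1}` gives the
stated form. -/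

open Finset Polynomial

lemma pochC_eq_eval_ascPochhammer (x : ℂ) (k : ℕ) :
    pochC x k = (ascPochhammer ℂ k).eval x := by
  induction k with
  | zero => simp [pochC]
  | succ k ih => rw [pochC, prod_range_succ, ← pochC, ih, ascPochhammer_succ_eval]

lemma pochC_add (x : ℂ) (p q : ℕ) : pochC x (p + q) = pochC x p * pochC (x + p) q := by
  simp only [pochC, prod_range_add, Nat.cast_add, add_assoc]

lemma pochC_one (n : ℕ) : pochC 1 n = n.factorial := by
  rw [pochC_eq_eval_ascPochhammer, ascPochhammer_eval_one]

lemma pochC_sub_natCast_self (x : ℂ) (n : ℕ) :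
    pochC (x - n) n = (-1) ^ n * pochC (1 - x) n := by
  rw [pochC_eq_eval_ascPochhammer, pochC_eq_eval_ascPochhammer, ← neg_sub,
    ascPochhammer_eval_neg_eq_descPochhammer, descPochhammer_eval_eq_ascPochhammer]
  ring_nf

lemma ring_choose_sub_one_eq_pochC_div (a : ℂ) (n : ℕ) :
    Ring.choose (a + n - 1) n = pochC a n / n.factorial := by
  rw [Ring.choose_eq_smul, descPochhammer_smeval_eq_ascPochhammer, ascPochhammer_smeval_eq_eval,
    pochC_eq_eval_ascPochhammer, smul_eq_mul, div_eq_inv_mul]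
  ring_nf

theorem hasSum_pochC_div_factorial_mul_pow (a : ℂ) {z : ℂ} (hz : ‖z‖ < 1) :
    HasSum (fun k => pochC a k / k.factorial * z ^ k) ((1 - z) ^ (-a)) := by
  have := (Complex.one_div_one_sub_cpow_hasFPowerSeriesOnBall_zero a).hasSum
    (y := z) (by simpa [← ofReal_norm] using hz)
  simpa [FormalMultilinearSeries.ofScalars_apply_eq, ring_choose_sub_one_eq_pochC_div,
    Complex.cpow_neg, mul_comm] using this

lemma pochC_natCast_add_one_ne_zero (M n : ℕ) : pochC (M + 1) n ≠ 0 :=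
  prod_ne_zero_iff.mpr fun i _ => by norm_cast; omega

theorem hasSum_pochC_add_div_pochC_mul_pow (a : ℂ) (M : ℕ) {z : ℂ} (hz : ‖z‖ < 1) (hz0 : z ≠ 0)
    (ha : pochC a M ≠ 0) :
    HasSum (fun n => pochC (a + M) n / pochC (M + 1) n * z ^ n)
      (M.factorial / (pochC a M * z ^ M) *
        ((1 - z) ^ (-a) - ∑ k ∈ range M, pochC a k / k.factorial * z ^ k)) := by
  have htail := (hasSum_nat_add_iff' M).mpr (hasSum_pochC_div_factorial_mul_pow a hz)
  refine (htail.mul_left _).congr_fun fun n => ?_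
  have hfac : ((n + M).factorial : ℂ) = M.factorial * pochC (M + 1) n := by
    rw [← pochC_one, add_comm, pochC_add, pochC_one, add_comm (1 : ℂ)]
  have hM : (M.factorial : ℂ) ≠ 0 := mod_cast M.factorial_ne_zero
  have hpoch := pochC_natCast_add_one_ne_zero M n
  rw [hfac, add_comm n M, pochC_add, pow_add]
  field_simp

lemma hypF_one_left (b c z : ℂ) :
    hypF 1 b c z = ∑' n : ℕ, pochC b n / pochC c n * z ^ n := by
  refine tsum_congr fun n => ?_
  have : (n.factorial : ℂ) ≠ 0 := mod_cast n.factorial_ne_zero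
  rw [pochC_one, mul_comm (pochC c n), mul_div_mul_left _ _ this]

/-- Reduction of `F(1,b;m;z)` to elementary functions:
`F(1,b;m;z) = (m-1)! (-z)^{1-m} / (1-b)_{m-1} · [(1-z)^{m-b-1} - ∑_{k=0}^{m-2} (b-m+1)_k/k! z^k]`
for a positive integer `m` with `m - b` not a positive integer, and `0 < |z| < 1`. -/
theorem hyp_one_b_m (m : ℕ) (hm : 1 ≤ m) (b z : ℂ)
    (hb : ∀ j : ℕ, 1 ≤ j → (m : ℂ) - b ≠ (j : ℂ))
    (hz0 : z ≠ 0) (hz : ‖z‖ < 1) :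
    hypF 1 b (m : ℂ) z =
      ((m - 1).factorial : ℂ) * (-z) ^ ((1 : ℂ) - (m : ℂ)) / pochC (1 - b) (m - 1) *
        ((1 - z) ^ ((m : ℂ) - b - 1) -
          ∑ k ∈ Finset.range (m - 1), pochC (b - (m : ℂ) + 1) k / (k.factorial : ℂ) * z ^ k) := by
  obtain ⟨M, rfl⟩ : ∃ M, m = M + 1 := ⟨m - 1, by omega⟩
  have ha : pochC (b - M) M ≠ 0 := prod_ne_zero_iff.mpr fun i _ h =>
    hb (i + 1) (by omega) (by push_cast; linear_combination -h)
  have hsum := hasSum_pochC_add_div_pochC_mul_pow (b - M) M hz hz0 ha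
  rw [sub_add_cancel] at hsum
  have hpow : (-z) ^ ((1 : ℂ) - ((M + 1 : ℕ) : ℂ)) = ((-1) ^ M * z ^ M)⁻¹ := by
    rw [show (1 : ℂ) - ((M + 1 : ℕ) : ℂ) = ((-M : ℤ) : ℂ) by push_cast; ring,
      Complex.cpow_intCast, zpow_neg, zpow_natCast, neg_pow]
  rw [hypF_one_left, hpow, Nat.add_sub_cancel, Nat.cast_add_one,
    show (M : ℂ) + 1 - b - 1 = -(b - M) by ring, show b - (M + 1) + 1 = b - M by ring,
    hsum.tsum_eq, pochC_sub_natCast_self]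
  ring
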